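/- In the setting P = F h^{-1} F* with F holomorphic and h = F*F invertible, with curvature K_P = −∂̄(h^{-1}∂h) and connection form θ_P = h^{-1}∂h, one has (∂̄P)·(∂²P) = F·(−(∂K_P + [θ_P, K_P]))·h^{-1}·F* on Ω, where [a,b] = ab − ba. -/

import Mathlib

/-!
Write `N = h⁻¹`, `Q = 1 - P` and `F' = ∂F`. Since `∂̄F = 0` and `∂F* = 0`, the Leibniz rule and
`∂N = -θ N` give `∂P = Q F' N F*`, `∂̄P = F N F'* Q`, `∂²P = Q (F'' - 2 F' θ) N F*`,
`K_P = -N F'* Q F'` and `∂K_P = -(θ K_P + K_P θ) - N F'* Q F''`. Substituting, both sides equal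
`F N F'* Q (F'' - 2 F' θ) N F*`, the left one because `Q` is idempotent.
-/

open Complex ContinuousLinearMap

/-- Wirtinger derivative ∂ = ∂/∂λ. -/
noncomputable def pd {E : Type*} [NormedAddCommGroup E] [NormedSpace ℂ E]
    (f : ℂ → E) : ℂ → E :=
  fun z => (2⁻¹ : ℂ) • (fderiv ℝ f z 1 - Complex.I • fderiv ℝ f z Complex.I)

/-- Wirtinger derivative ∂̄ = ∂/∂λ̄. -/
noncomputable def pdbar {E : Type*} [NormedAddCommGroup E] [NormedSpace ℂ E]
    (f : ℂ → E) : ℂ → E :=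
  fun z => (2⁻¹ : ℂ) • (fderiv ℝ f z 1 + Complex.I • fderiv ℝ f z Complex.I)

section Wirtinger

variable {E : Type*} [NormedAddCommGroup E] [NormedSpace ℂ E] {f g : ℂ → E} {z : ℂ} {s : Set ℂ}

theorem Filter.EventuallyEq.pd_eq (h : f =ᶠ[nhds z] g) : pd f z = pd g z := by
  simp only [pd, h.fderiv_eq]

theorem Filter.EventuallyEq.pdbar_eq (h : f =ᶠ[nhds z] g) : pdbar f z = pdbar g z := by
  simp only [pdbar, h.fderiv_eq]

theorem DifferentiableAt.fderiv_real_apply (hf : DifferentiableAt ℂ f z) (v : ℂ) :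
    fderiv ℝ f z v = v • deriv f z := by
  simp [(hf.hasDerivAt.hasFDerivAt.restrictScalars ℝ).fderiv]

theorem DifferentiableAt.pd_eq_deriv (hf : DifferentiableAt ℂ f z) : pd f z = deriv f z := by
  simp only [pd, hf.fderiv_real_apply, smul_smul, I_mul_I]
  module

theorem DifferentiableAt.pdbar_eq_zero (hf : DifferentiableAt ℂ f z) : pdbar f z = 0 := by
  simp only [pdbar, hf.fderiv_real_apply, smul_smul, I_mul_I]
  module

theorem pd_const_sub (c : E) : pd (fun w => c - f w) z = -pd f z := by
  simp only [pd, fderiv_const_sub, neg_apply]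
  module

theorem pd_neg : pd (fun w => -f w) z = -pd f z := by
  simp only [pd, fderiv_fun_neg, neg_apply]
  module

theorem Set.EqOn.pd (hfg : s.EqOn f g) (hs : IsOpen s) : s.EqOn (pd f) (pd g) :=
  fun _ hz => (hfg.eventuallyEq_of_mem (hs.mem_nhds hz)).pd_eq

theorem Set.EqOn.pdbar (hfg : s.EqOn f g) (hs : IsOpen s) : s.EqOn (pdbar f) (pdbar g) :=
  fun _ hz => (hfg.eventuallyEq_of_mem (hs.mem_nhds hz)).pdbar_eq

end Wirtinger

section Composition

variable {G₁ G₂ G₃ : Type*} [NormedAddCommGroup G₁] [NormedAddCommGroup G₂] [NormedAddCommGroup G₃]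
  [NormedSpace ℂ G₁] [NormedSpace ℂ G₂] [NormedSpace ℂ G₃]
  {f : ℂ → G₂ →L[ℂ] G₃} {g : ℂ → G₁ →L[ℂ] G₂} {z : ℂ}

theorem DifferentiableAt.clm_comp_real (hf : DifferentiableAt ℝ f z) (hg : DifferentiableAt ℝ g z) :
    DifferentiableAt ℝ (fun w => (f w).comp (g w)) z :=
  (((compL ℂ G₁ G₂ G₃).bilinearRestrictScalars ℝ).hasFDerivAt_of_bilinear
    hf.hasFDerivAt hg.hasFDerivAt).differentiableAt

theorem fderiv_clm_comp_real_apply (hf : DifferentiableAt ℝ f z) (hg : DifferentiableAt ℝ g z)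
    (v : ℂ) :
    fderiv ℝ (fun w => (f w).comp (g w)) z v =
      (fderiv ℝ f z v).comp (g z) + (f z).comp (fderiv ℝ g z v) := by
  have h : HasFDerivAt (fun w => (f w).comp (g w)) _ z :=
    ((compL ℂ G₁ G₂ G₃).bilinearRestrictScalars ℝ).hasFDerivAt_of_bilinear
      hf.hasFDerivAt hg.hasFDerivAt
  rw [h.fderiv]
  simp [add_comm]

theorem pd_comp (hf : DifferentiableAt ℝ f z) (hg : DifferentiableAt ℝ g z) :
    pd (fun w => (f w).comp (g w)) z = (pd f z).comp (g z) + (f z).comp (pd g z) := by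
  simp only [pd, fderiv_clm_comp_real_apply hf hg, smul_comp, comp_smul, sub_comp,
    comp_sub]
  module

theorem pdbar_comp (hf : DifferentiableAt ℝ f z) (hg : DifferentiableAt ℝ g z) :
    pdbar (fun w => (f w).comp (g w)) z = (pdbar f z).comp (g z) + (f z).comp (pdbar g z) := by
  simp only [pdbar, fderiv_clm_comp_real_apply hf hg, smul_comp, comp_smul, add_comp,
    comp_add]
  module

end Composition

section Adjoint

variable {H K : Type*} [NormedAddCommGroup H] [InnerProductSpace ℂ H] [CompleteSpace H]
  [NormedAddCommGroup K] [InnerProductSpace ℂ K] [CompleteSpace K] {f : ℂ → K →L[ℂ] H} {z : ℂ}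

variable (H K) in
noncomputable def adjointRealCLM : (K →L[ℂ] H) →L[ℝ] (H →L[ℂ] K) :=
  AddMonoidHom.toRealLinearMap (adjoint : (K →L[ℂ] H) ≃ₗᵢ⋆[ℂ] _).toAddEquiv.toAddMonoidHom
    (adjoint : (K →L[ℂ] H) ≃ₗᵢ⋆[ℂ] _).continuous

theorem DifferentiableAt.adjoint_real (hf : DifferentiableAt ℝ f z) :
    DifferentiableAt ℝ (fun w => adjoint (f w)) z :=
  (adjointRealCLM H K).differentiableAt.comp z hf

theorem fderiv_adjoint_real_apply (hf : DifferentiableAt ℝ f z) (v : ℂ) :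
    fderiv ℝ (fun w => adjoint (f w)) z v = adjoint (fderiv ℝ f z v) :=
  congrArg (· v) (((adjointRealCLM H K).hasFDerivAt.comp z hf.hasFDerivAt).fderiv)

theorem pd_adjoint (hf : DifferentiableAt ℝ f z) :
    pd (fun w => adjoint (f w)) z = adjoint (pdbar f z) := by
  simp only [pd, pdbar, fderiv_adjoint_real_apply hf, LinearIsometryEquiv.map_smulₛₗ, map_add,
    map_inv₀, map_ofNat, conj_I]
  module

theorem pdbar_adjoint (hf : DifferentiableAt ℝ f z) :
    pdbar (fun w => adjoint (f w)) z = adjoint (pd f z) := by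
  simp only [pd, pdbar, fderiv_adjoint_real_apply hf, LinearIsometryEquiv.map_smulₛₗ, map_sub,
    map_inv₀, map_ofNat, conj_I]
  module

end Adjoint

section Inverse

variable {K : Type*} [NormedAddCommGroup K] [NormedSpace ℂ K] [CompleteSpace K]
  {f : ℂ → K →L[ℂ] K} {z : ℂ}

theorem fderiv_ringInverse_real_apply (hf : DifferentiableAt ℝ f z) (hu : IsUnit (f z)) (v : ℂ) :
    fderiv ℝ (fun w => Ring.inverse (f w)) z v =
      -(Ring.inverse (f z) * fderiv ℝ f z v * Ring.inverse (f z)) := by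
  obtain ⟨u, hu⟩ := hu
  have hinv : HasFDerivAt Ring.inverse (-mulLeftRight ℝ _ ↑u⁻¹ ↑u⁻¹) (f z) :=
    hu ▸ hasFDerivAt_ringInverse u
  have h : HasFDerivAt (fun w => Ring.inverse (f w)) _ z := hinv.comp z hf.hasFDerivAt
  rw [h.fderiv, ← hu, Ring.inverse_unit]
  simp

theorem pd_ringInverse (hf : DifferentiableAt ℝ f z) (hu : IsUnit (f z)) :
    pd (fun w => Ring.inverse (f w)) z = -(Ring.inverse (f z) * pd f z * Ring.inverse (f z)) := by
  simp only [pd, fderiv_ringInverse_real_apply hf hu, mul_sub, sub_mul, mul_smul_comm,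
    smul_mul_assoc]
  module

theorem pdbar_ringInverse (hf : DifferentiableAt ℝ f z) (hu : IsUnit (f z)) :
    pdbar (fun w => Ring.inverse (f w)) z =
      -(Ring.inverse (f z) * pdbar f z * Ring.inverse (f z)) := by
  simp only [pdbar, fderiv_ringInverse_real_apply hf hu, mul_add, add_mul, mul_smul_comm,
    smul_mul_assoc]
  module

end Inverse

section Holomorphic

variable {H K : Type*} [NormedAddCommGroup H] [InnerProductSpace ℂ H] [CompleteSpace H]
  [NormedAddCommGroup K] [InnerProductSpace ℂ K] [CompleteSpace K] {f : ℂ → K →L[ℂ] H} {z : ℂ}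

theorem DifferentiableAt.pd_adjoint_eq_zero (hf : DifferentiableAt ℂ f z) :
    pd (fun w => adjoint (f w)) z = 0 := by
  rw [pd_adjoint (hf.restrictScalars ℝ), hf.pdbar_eq_zero, map_zero]

theorem DifferentiableAt.pdbar_adjoint_eq (hf : DifferentiableAt ℂ f z) :
    pdbar (fun w => adjoint (f w)) z = adjoint (deriv f z) := by
  rw [pdbar_adjoint (hf.restrictScalars ℝ), hf.pd_eq_deriv]

end Holomorphic

section RangeProjection

variable {H K : Type*} [NormedAddCommGroup H] [InnerProductSpace ℂ H] [CompleteSpace H]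
  [NormedAddCommGroup K] [InnerProductSpace ℂ K] [CompleteSpace K]

variable (F : ℂ → K →L[ℂ] H)

noncomputable def gramOp (w : ℂ) : K →L[ℂ] K := adjoint (F w) ∘L F w

noncomputable def gramOpInv (w : ℂ) : K →L[ℂ] K := Ring.inverse (gramOp F w)

noncomputable def rangeProj (w : ℂ) : H →L[ℂ] H := F w ∘L gramOpInv F w ∘L adjoint (F w)

noncomputable def connForm (w : ℂ) : K →L[ℂ] K := gramOpInv F w * pd (gramOp F) w

noncomputable def curvature (w : ℂ) : K →L[ℂ] K := -pdbar (connForm F) w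

variable {F} {w : ℂ}

theorem isIdempotentElem_rangeProj (hu : IsUnit (gramOp F w)) :
    IsIdempotentElem (rangeProj F w) := by
  have h (y : K) : gramOpInv F w (adjoint (F w) (F w y)) = y :=
    congrArg (· y) (Ring.inverse_mul_cancel _ hu)
  ext1 x
  simp [rangeProj, h]

theorem differentiableAt_gramOp (hF : DifferentiableAt ℂ F w) :
    DifferentiableAt ℝ (gramOp F) w :=
  (hF.restrictScalars ℝ).adjoint_real.clm_comp_real (hF.restrictScalars ℝ)

theorem differentiableAt_gramOpInv (hF : DifferentiableAt ℂ F w)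
    (hu : IsUnit (gramOp F w)) : DifferentiableAt ℝ (gramOpInv F) w :=
  (differentiableAt_gramOp hF).inverse hu

theorem differentiableAt_rangeProj (hF : DifferentiableAt ℂ F w)
    (hu : IsUnit (gramOp F w)) : DifferentiableAt ℝ (rangeProj F) w :=
  (hF.restrictScalars ℝ).clm_comp_real
    ((differentiableAt_gramOpInv hF hu).clm_comp_real (hF.restrictScalars ℝ).adjoint_real)

theorem pd_gramOp (hF : DifferentiableAt ℂ F w) :
    pd (gramOp F) w = adjoint (F w) ∘L deriv F w := by
  change pd (fun v => adjoint (F v) ∘L F v) w = _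
  rw [pd_comp (hF.restrictScalars ℝ).adjoint_real (hF.restrictScalars ℝ),
    hF.pd_adjoint_eq_zero, hF.pd_eq_deriv, zero_comp, zero_add]

theorem pdbar_gramOp (hF : DifferentiableAt ℂ F w) :
    pdbar (gramOp F) w = adjoint (deriv F w) ∘L F w := by
  change pdbar (fun v => adjoint (F v) ∘L F v) w = _
  rw [pdbar_comp (hF.restrictScalars ℝ).adjoint_real (hF.restrictScalars ℝ),
    hF.pdbar_adjoint_eq, hF.pdbar_eq_zero, comp_zero, add_zero]

theorem connForm_eq (hF : DifferentiableAt ℂ F w) :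
    connForm F w = gramOpInv F w ∘L adjoint (F w) ∘L deriv F w := by
  rw [connForm, pd_gramOp hF, mul_def]

theorem pd_gramOpInv (hF : DifferentiableAt ℂ F w) (hu : IsUnit (gramOp F w)) :
    pd (gramOpInv F) w = -(connForm F w * gramOpInv F w) := by
  change pd (fun v => Ring.inverse (gramOp F v)) w = _
  rw [pd_ringInverse (differentiableAt_gramOp hF) hu, connForm, gramOpInv]

theorem pdbar_gramOpInv (hF : DifferentiableAt ℂ F w) (hu : IsUnit (gramOp F w)) :
    pdbar (gramOpInv F) w =
      -(gramOpInv F w ∘L adjoint (deriv F w) ∘L F w ∘L gramOpInv F w) := by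
  change pdbar (fun v => Ring.inverse (gramOp F v)) w = _
  rw [pdbar_ringInverse (differentiableAt_gramOp hF) hu, pdbar_gramOp hF]
  simp only [mul_def, comp_assoc, gramOpInv]

theorem pd_rangeProj (hF : DifferentiableAt ℂ F w) (hu : IsUnit (gramOp F w)) :
    pd (rangeProj F) w = (1 - rangeProj F w) ∘L deriv F w ∘L gramOpInv F w ∘L adjoint (F w) := by
  change pd (fun v => F v ∘L gramOpInv F v ∘L adjoint (F v)) w = _
  rw [pd_comp (hF.restrictScalars ℝ)
      ((differentiableAt_gramOpInv hF hu).clm_comp_real (hF.restrictScalars ℝ).adjoint_real),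
    pd_comp (differentiableAt_gramOpInv hF hu) (hF.restrictScalars ℝ).adjoint_real,
    hF.pd_eq_deriv, pd_gramOpInv hF hu, hF.pd_adjoint_eq_zero, connForm_eq hF]
  simp only [rangeProj, mul_def, comp_zero, add_zero, neg_comp, comp_neg, sub_comp, one_def,
    id_comp, comp_assoc]
  abel

theorem pdbar_rangeProj (hF : DifferentiableAt ℂ F w) (hu : IsUnit (gramOp F w)) :
    pdbar (rangeProj F) w =
      F w ∘L gramOpInv F w ∘L adjoint (deriv F w) ∘L (1 - rangeProj F w) := by
  change pdbar (fun v => F v ∘L gramOpInv F v ∘L adjoint (F v)) w = _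
  rw [pdbar_comp (hF.restrictScalars ℝ)
      ((differentiableAt_gramOpInv hF hu).clm_comp_real (hF.restrictScalars ℝ).adjoint_real),
    pdbar_comp (differentiableAt_gramOpInv hF hu) (hF.restrictScalars ℝ).adjoint_real,
    hF.pdbar_eq_zero, pdbar_gramOpInv hF hu, hF.pdbar_adjoint_eq]
  simp only [rangeProj, zero_comp, zero_add, neg_comp, comp_neg, comp_sub, one_def, comp_id,
    comp_add, comp_assoc]
  abel

variable {Ω : Set ℂ}

theorem curvature_eq (hΩ : IsOpen Ω) (hF : DifferentiableOn ℂ F Ω)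
    (hu : IsUnit (gramOp F w)) (hw : w ∈ Ω) :
    curvature F w =
      -(gramOpInv F w ∘L adjoint (deriv F w) ∘L (1 - rangeProj F w) ∘L deriv F w) := by
  have hFw := hF.differentiableAt (hΩ.mem_nhds hw)
  have hF'w := (hF.deriv hΩ).differentiableAt (hΩ.mem_nhds hw)
  have hθ : Ω.EqOn (connForm F) (fun v => gramOpInv F v ∘L adjoint (F v) ∘L deriv F v) :=
    fun v hv => connForm_eq (hF.differentiableAt (hΩ.mem_nhds hv))
  rw [curvature, hθ.pdbar hΩ hw, pdbar_comp (differentiableAt_gramOpInv hFw hu)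
      ((hFw.restrictScalars ℝ).adjoint_real.clm_comp_real (hF'w.restrictScalars ℝ)),
    pdbar_comp (hFw.restrictScalars ℝ).adjoint_real (hF'w.restrictScalars ℝ),
    pdbar_gramOpInv hFw hu, hFw.pdbar_adjoint_eq, hF'w.pdbar_eq_zero]
  simp only [rangeProj, comp_zero, add_zero, neg_comp, comp_sub, sub_comp, one_def, id_comp,
    comp_assoc]
  abel

theorem pd_pd_rangeProj (hΩ : IsOpen Ω) (hF : DifferentiableOn ℂ F Ω)
    (hu : ∀ v ∈ Ω, IsUnit (gramOp F v)) (hw : w ∈ Ω) :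
    pd (pd (rangeProj F)) w = (1 - rangeProj F w) ∘L
      (deriv (deriv F) w - 2 • deriv F w ∘L connForm F w) ∘L gramOpInv F w ∘L adjoint (F w) := by
  have hFw := hF.differentiableAt (hΩ.mem_nhds hw)
  have hF'w := (hF.deriv hΩ).differentiableAt (hΩ.mem_nhds hw)
  have hP : Ω.EqOn (pd (rangeProj F))
      (fun v => (1 - rangeProj F v) ∘L deriv F v ∘L gramOpInv F v ∘L adjoint (F v)) :=
    fun v hv => pd_rangeProj (hF.differentiableAt (hΩ.mem_nhds hv)) (hu v hv)
  have hN := differentiableAt_gramOpInv hFw (hu w hw)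
  have hA := (hFw.restrictScalars ℝ).adjoint_real
  rw [hP.pd hΩ hw, pd_comp ((differentiableAt_rangeProj hFw (hu w hw)).const_sub 1)
      ((hF'w.restrictScalars ℝ).clm_comp_real (hN.clm_comp_real hA)),
    pd_comp (hF'w.restrictScalars ℝ) (hN.clm_comp_real hA), pd_comp hN hA, pd_const_sub,
    pd_rangeProj hFw (hu w hw), hF'w.pd_eq_deriv, pd_gramOpInv hFw (hu w hw),
    hFw.pd_adjoint_eq_zero, connForm_eq hFw]
  simp only [mul_def, comp_zero, add_zero, neg_comp, comp_neg, comp_add, comp_sub, sub_comp,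
    smul_comp, comp_smul, comp_assoc]
  abel

theorem pd_curvature (hΩ : IsOpen Ω) (hF : DifferentiableOn ℂ F Ω)
    (hu : ∀ v ∈ Ω, IsUnit (gramOp F v)) (hw : w ∈ Ω) :
    pd (curvature F) w = -(connForm F w * curvature F w + curvature F w * connForm F w) -
      gramOpInv F w ∘L adjoint (deriv F w) ∘L (1 - rangeProj F w) ∘L deriv (deriv F) w := by
  have hFw := hF.differentiableAt (hΩ.mem_nhds hw)
  have hF'w := (hF.deriv hΩ).differentiableAt (hΩ.mem_nhds hw)
  have hK : Ω.EqOn (curvature F)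
      (fun v => -(gramOpInv F v ∘L adjoint (deriv F v) ∘L (1 - rangeProj F v) ∘L deriv F v)) :=
    fun v hv => curvature_eq hΩ hF (hu v hv) hv
  have hQ := (differentiableAt_rangeProj hFw (hu w hw)).const_sub 1
  have hB := (hF'w.restrictScalars ℝ).adjoint_real
  rw [hK.pd hΩ hw, pd_neg, pd_comp (differentiableAt_gramOpInv hFw (hu w hw))
      (hB.clm_comp_real (hQ.clm_comp_real (hF'w.restrictScalars ℝ))),
    pd_comp hB (hQ.clm_comp_real (hF'w.restrictScalars ℝ)),
    pd_comp hQ (hF'w.restrictScalars ℝ), pd_gramOpInv hFw (hu w hw), hF'w.pd_adjoint_eq_zero,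
    pd_const_sub, pd_rangeProj hFw (hu w hw), hF'w.pd_eq_deriv, curvature_eq hΩ hF (hu w hw) hw,
    connForm_eq hFw]
  simp only [mul_def, zero_comp, neg_comp, comp_neg, comp_add, comp_sub, sub_comp, comp_assoc]
  abel

theorem pdbar_rangeProj_mul_pd_pd_rangeProj (hΩ : IsOpen Ω) (hF : DifferentiableOn ℂ F Ω)
    (hu : ∀ v ∈ Ω, IsUnit (gramOp F v)) (hw : w ∈ Ω) :
    pdbar (rangeProj F) w * pd (pd (rangeProj F)) w =
      F w ∘L (-(pd (curvature F) w + (connForm F w * curvature F w -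
        curvature F w * connForm F w)) * gramOpInv F w) ∘L adjoint (F w) := by
  have hQ := (isIdempotentElem_rangeProj (hu w hw)).one_sub
  rw [pdbar_rangeProj (hF.differentiableAt (hΩ.mem_nhds hw)) (hu w hw),
    pd_pd_rangeProj hΩ hF hu hw, pd_curvature hΩ hF hu hw, curvature_eq hΩ hF (hu w hw) hw]
  generalize connForm F w = θ
  generalize 1 - rangeProj F w = Q at hQ ⊢
  have hQQ (X : H →L[ℂ] H) : Q ∘L Q ∘L X = Q ∘L X := by
    rw [← comp_assoc]
    exact congrArg (· ∘L X) hQ.eq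
  simp only [mul_def, neg_comp, comp_neg, comp_add, add_comp, comp_sub, sub_comp, smul_comp,
    comp_smul, comp_assoc, hQQ]
  abel

end RangeProjection

theorem stmt8
    {H K : Type*} [NormedAddCommGroup H] [InnerProductSpace ℂ H] [CompleteSpace H]
    [NormedAddCommGroup K] [InnerProductSpace ℂ K] [CompleteSpace K]
    (Ω : Set ℂ) (hΩ : IsOpen Ω)
    (F : ℂ → K →L[ℂ] H)
    (hF : DifferentiableOn ℂ F Ω)
    (h : ℂ → K →L[ℂ] K)
    (hdef : ∀ z ∈ Ω, h z = ContinuousLinearMap.adjoint (F z) ∘L F z)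
    (hinv : ∀ z ∈ Ω, IsUnit (h z))
    (hi : ℂ → K →L[ℂ] K) (hhi : ∀ z ∈ Ω, hi z = Ring.inverse (h z))
    (P : ℂ → H →L[ℂ] H)
    (hP : ∀ z ∈ Ω, P z = F z ∘L hi z ∘L ContinuousLinearMap.adjoint (F z))
    (KP : ℂ → K →L[ℂ] K)
    (hKP : ∀ z ∈ Ω, KP z = -(pdbar (fun w => hi w * pd h w) z))
    (θ : ℂ → K →L[ℂ] K) (hθ : ∀ z ∈ Ω, θ z = hi z * pd h z)
    : ∀ z ∈ Ω,
      pdbar P z * (pd^[2] P) z =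
        F z ∘L ((-(pd KP z + (θ z * KP z - KP z * θ z))) * hi z) ∘L
          ContinuousLinearMap.adjoint (F z) := by
  have hgram : Ω.EqOn h (gramOp F) := hdef
  have hgramInv : Ω.EqOn hi (gramOpInv F) := fun w hw => by rw [hhi w hw, hdef w hw]; rfl
  have hproj : Ω.EqOn P (rangeProj F) := fun w hw => by rw [hP w hw, hgramInv hw]; rfl
  have hconn : Ω.EqOn θ (connForm F) := fun w hw => by
    rw [hθ w hw, hgramInv hw, hgram.pd hΩ hw]; rfl
  have hconn' : Ω.EqOn (fun w => hi w * pd h w) (connForm F) :=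
    fun w hw => (hθ w hw).symm.trans (hconn hw)
  have hcurv : Ω.EqOn KP (curvature F) := fun w hw => by
    rw [hKP w hw, hconn'.pdbar hΩ hw]; rfl
  intro z hz
  rw [hconn hz, hcurv.pd hΩ hz, hgramInv hz, Function.iterate_succ_apply, Function.iterate_one,
    (hproj.pd hΩ).pd hΩ hz, hproj.pdbar hΩ hz, hcurv hz]
  exact pdbar_rangeProj_mul_pd_pd_rangeProj hΩ hF (fun w hw => hgram hw ▸ hinv w hw) hz
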